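/- arXiv:2503.01498 — 4 statements merged into one kernel-verified Lean document; each statement's English description precedes it below -/
import Mathlib

section
/- Let $g_n$, $n \in \mathbb{Z}$, satisfy $|g_n| \le D r^{|n|}$ for some $D > 0$, $0 < r < 1$, and define $c_m = \frac{1}{m!} \sum_{n \in \mathbb{Z}} (in)^m g_n$ for $m \ge 1$. Then $|c_m| \le \frac{2D}{r} \left(\ln \frac{1}{r}\right)^{-m-1}$ for all $m \ge 1$. -/
open Set MeasureTheory Real
open scoped Nat

/-!
With `a = log (1 / r)`, the hypothesis gives `|c_m| ≤ (2D / m!) ∑_{k ≥ 0} k^m r^k`, the two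
halves of `ℤ` each contributing the one-sided sum. Since `r = e^{-a}`,
`k^m r^k = r⁻¹ k^m e^{-a(k+1)} ≤ r⁻¹ ∫_k^{k+1} x^m e^{-ax} dx`, so the one-sided sum is at most
`r⁻¹ ∫_0^∞ x^m e^{-ax} dx = m! / (r a^{m+1})`.
-/

lemma HasSum.int_natAbs {G : Type*} [AddCommGroup G] [TopologicalSpace G]
    [IsTopologicalAddGroup G] {f : ℕ → G} {a : G} (hf : HasSum f a) :
    HasSum (fun n : ℤ => f n.natAbs) (a + a - f 0) := by
  refine HasSum.of_nat_of_neg (f := fun n : ℤ => f n.natAbs) ?_ ?_ <;> simpa using hf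

lemma integral_pow_mul_exp_neg_mul_Ioi (m : ℕ) {a : ℝ} (ha : 0 < a) :
    ∫ x in Ioi (0 : ℝ), x ^ m * exp (-(a * x)) = m ! / a ^ (m + 1) := by
  have h := integral_rpow_mul_exp_neg_mul_Ioi (a := m + 1) (by positivity) ha
  rw [Gamma_nat_eq_factorial, add_sub_cancel_right, ← Nat.cast_succ, rpow_natCast] at h
  simp only [rpow_natCast] at h
  rw [h, div_pow, one_pow, one_div_mul_eq_div]

lemma integrableOn_pow_mul_exp_neg_mul_Ioi (m : ℕ) {a : ℝ} (ha : 0 < a) :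
    IntegrableOn (fun x : ℝ => x ^ m * exp (-(a * x))) (Ioi 0) := by
  simpa using integrableOn_rpow_mul_exp_neg_mul_rpow (s := m) (p := 1)
    (neg_one_lt_zero.trans_le m.cast_nonneg) one_pos ha

lemma tsum_le_integral_Ioi_of_le_intervalIntegral {u : ℕ → ℝ} {f : ℝ → ℝ}
    (hu : ∀ n, 0 ≤ u n) (hf_nonneg : ∀ x, 0 < x → 0 ≤ f x) (hf : IntegrableOn f (Ioi 0))
    (hle : ∀ n : ℕ, u n ≤ ∫ x in (n : ℝ)..(n + 1 : ℕ), f x) :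
    ∑' n, u n ≤ ∫ x in Ioi 0, f x := by
  refine tsum_le_of_sum_range_le hu fun N => ?_
  have hint : ∀ k < N, IntervalIntegrable f volume (k : ℝ) (k + 1 : ℕ) := fun k _ =>
    (intervalIntegrable_iff_integrableOn_Ioc_of_le (by simp)).2
      (hf.mono_set fun x hx => (Nat.cast_nonneg k).trans_lt hx.1)
  calc ∑ n ∈ Finset.range N, u n ≤ ∑ n ∈ Finset.range N, ∫ x in (n : ℝ)..(n + 1 : ℕ), f x :=
        Finset.sum_le_sum fun n _ => hle n
    _ = ∫ x in (0 : ℕ)..(N : ℝ), f x := intervalIntegral.sum_integral_adjacent_intervals hint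
    _ = ∫ x in Ioc 0 (N : ℝ), f x := by simp [intervalIntegral.integral_of_le]
    _ ≤ ∫ x in Ioi 0, f x :=
        setIntegral_mono_set hf ((ae_restrict_mem measurableSet_Ioi).mono hf_nonneg)
          Ioc_subset_Ioi_self.eventuallyLE

lemma pow_mul_exp_neg_mul_succ_le_intervalIntegral (m n : ℕ) {a : ℝ} (ha : 0 ≤ a) :
    (n : ℝ) ^ m * exp (-(a * (n + 1 : ℕ))) ≤
      ∫ x in (n : ℝ)..(n + 1 : ℕ), x ^ m * exp (-(a * x)) := by
  have hn : (n : ℝ) ≤ (n + 1 : ℕ) := by simp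
  calc (n : ℝ) ^ m * exp (-(a * (n + 1 : ℕ)))
        = ∫ _ in (n : ℝ)..(n + 1 : ℕ), (n : ℝ) ^ m * exp (-(a * (n + 1 : ℕ))) := by simp
    _ ≤ _ := by
      refine intervalIntegral.integral_mono_on hn intervalIntegrable_const
        (by apply Continuous.intervalIntegrable; fun_prop) fun x ⟨hnx, hxn⟩ => ?_
      have hx : 0 ≤ x := n.cast_nonneg.trans hnx
      gcongr

lemma tsum_pow_mul_exp_neg_le (m : ℕ) {a : ℝ} (ha : 0 < a) :
    ∑' n : ℕ, (n : ℝ) ^ m * exp (-a) ^ n ≤ exp a * (m ! / a ^ (m + 1)) := by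
  have key : ∀ n : ℕ, (n : ℝ) ^ m * exp (-a) ^ n =
      exp a * ((n : ℝ) ^ m * exp (-(a * (n + 1 : ℕ)))) := by
    intro n
    rw [← exp_nat_mul, mul_left_comm, ← exp_add]
    push_cast; ring_nf
  simp_rw [key, tsum_mul_left]
  gcongr
  rw [← integral_pow_mul_exp_neg_mul_Ioi m ha]
  exact tsum_le_integral_Ioi_of_le_intervalIntegral (fun n => by positivity)
    (fun x hx => by positivity) (integrableOn_pow_mul_exp_neg_mul_Ioi m ha)
    fun n => pow_mul_exp_neg_mul_succ_le_intervalIntegral m n ha.le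

theorem maclaurin_coeff_bound
    (g : ℤ → ℂ) (c : ℕ → ℂ) (D r : ℝ) (hD : 0 < D) (hr0 : 0 < r) (hr1 : r < 1)
    (hg : ∀ n : ℤ, ‖g n‖ ≤ D * r ^ n.natAbs)
    (hc : ∀ m : ℕ, c m = (1 / (Nat.factorial m) : ℂ) *
      ∑' n : ℤ, (Complex.I * (n : ℂ)) ^ m * g n) :
    ∀ m : ℕ, 1 ≤ m →
      ‖c m‖ ≤ (2 * D / r) * Real.log (1 / r) ^ (-(m : ℤ) - 1) := by
  intro m _
  set a := log (1 / r)
  have ha : 0 < a := log_pos (one_lt_one_div hr0 hr1)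
  have hexp : exp (-a) = r := by rw [← log_inv, one_div, inv_inv, exp_log hr0]
  set w : ℕ → ℝ := fun k => (k : ℝ) ^ m * r ^ k
  have hw : Summable w :=
    summable_pow_mul_geometric_of_norm_lt_one m (by rwa [norm_of_nonneg hr0.le])
  have hw0 : 0 ≤ w 0 := by positivity
  have hterm : ∀ n : ℤ, ‖(Complex.I * n) ^ m * g n‖ ≤ D * w n.natAbs := fun n => by
    rw [norm_mul, norm_pow, norm_mul, Complex.norm_I, one_mul, Complex.norm_intCast,
      ← Int.cast_abs, ← Nat.cast_natAbs, mul_left_comm]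
    exact mul_le_mul_of_nonneg_left (hg n) (by positivity)
  have hsum := hw.hasSum.int_natAbs.mul_left D
  have hS : ∑' k, w k ≤ exp a * (m ! / a ^ (m + 1)) := by
    simpa only [w, hexp] using tsum_pow_mul_exp_neg_le m ha
  calc ‖c m‖ = (m ! : ℝ)⁻¹ * ‖∑' n : ℤ, (Complex.I * n) ^ m * g n‖ := by
        rw [hc]; simp
    _ ≤ (m ! : ℝ)⁻¹ * (D * (∑' k, w k + ∑' k, w k - w 0)) := by
        gcongr; exact tsum_of_norm_bounded hsum hterm
    _ ≤ (m ! : ℝ)⁻¹ * (D * (2 * (exp a * (m ! / a ^ (m + 1))))) := by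
        gcongr
        linarith
    _ = (2 * D / r) * a ^ (-(m : ℤ) - 1) := by
        rw [exp_log (by positivity), show -(m : ℤ) - 1 = -((m + 1 : ℕ) : ℤ) by push_cast; ring,
          zpow_neg, zpow_natCast]
        field_simp
end

section
/- Let $N \ge 1$ and for $1 \le k \le N$ let $u_{k,N} : [0,\infty) \to [0,\infty)$ be continuous functions satisfying $u_{k,N}(t) \le k \int_0^t \big(1 + \sum_{l=k+1}^{N} u_{l,N}(s)\big)\, ds$ for all $t \ge 0$. Then for every $2 \le k \le N$ and $t \ge 0$, $1 + \sum_{l=k}^{N} u_{l,N}(t) \le \sum_{m=0}^{N-k+1} \binom{N}{m}\binom{N-k+1}{m} t^m$. -/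
/-!
Put `P_n(t) = ∑_{m ≤ n} C(N, m) C(n, m) t^m`, so that `P_0 = 1`. By downward induction on `k`,
`1 + ∑_{l ≥ k} u_l(t) ≤ P_{N+1-k}(t)`: the integral inequality for `u_k` and the bound for `k + 1`
give `1 + ∑_{l ≥ k} u_l ≤ P_n + k ∫₀ᵗ P_n` with `n = N - k`, and termwise
`k C(N, m) / (m + 1) ≤ C(N, m + 1)` for `m ≤ N - k`, which together with Pascal's rule
`C(n + 1, m + 1) = C(n, m) + C(n, m + 1)` yields `P_n + k ∫₀ᵗ P_n ≤ P_{n+1}`.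
-/

open Finset

noncomputable def choosePoly (N n : ℕ) (t : ℝ) : ℝ :=
  ∑ m ∈ range (n + 1), (N.choose m : ℝ) * (n.choose m : ℝ) * t ^ m

section choosePoly

variable (N n : ℕ)

@[simp]
theorem choosePoly_zero (t : ℝ) : choosePoly N 0 t = 1 := by
  simp [choosePoly]

theorem continuous_choosePoly : Continuous (choosePoly N n) :=
  continuous_finsetSum _ fun m _ => continuous_const.mul (continuous_pow m)

theorem choosePoly_succ (t : ℝ) :
    choosePoly N (n + 1) t = choosePoly N n t +
      ∑ m ∈ range (n + 1), (N.choose (m + 1) : ℝ) * (n.choose m : ℝ) * t ^ (m + 1) := by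
  have hPn :
      choosePoly N n t = ∑ m ∈ range (n + 2), (N.choose m : ℝ) * (n.choose m : ℝ) * t ^ m := by
    rw [choosePoly, sum_range_succ _ (n + 1), Nat.choose_succ_self]
    simp
  rw [hPn, choosePoly, sum_range_succ', sum_range_succ' _ (n + 1)]
  simp only [Nat.choose_succ_succ', Nat.choose_zero_right, Nat.cast_add, add_mul, mul_add,
    sum_add_distrib]
  ring

theorem integral_choosePoly (t : ℝ) :
    ∫ s in (0 : ℝ)..t, choosePoly N n s =
      ∑ m ∈ range (n + 1), (N.choose m : ℝ) * (n.choose m : ℝ) * (t ^ (m + 1) / (m + 1)) := by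
  unfold choosePoly
  rw [intervalIntegral.integral_finsetSum fun m _ =>
    ((continuous_pow m).const_mul _).intervalIntegrable 0 t]
  refine sum_congr rfl fun m _ => ?_
  rw [intervalIntegral.integral_const_mul, integral_pow]
  simp

end choosePoly

theorem Nat.mul_choose_le_succ_mul_choose_succ {N k m : ℕ} (h : k + m ≤ N) :
    k * N.choose m ≤ (m + 1) * N.choose (m + 1) := by
  rw [mul_comm (m + 1), Nat.choose_succ_right_eq, mul_comm]
  exact Nat.mul_le_mul_left _ (by omega)

theorem choosePoly_add_mul_integral_le {N n k : ℕ} (h : k + n ≤ N) {t : ℝ} (ht : 0 ≤ t) :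
    choosePoly N n t + k * ∫ s in (0 : ℝ)..t, choosePoly N n s ≤ choosePoly N (n + 1) t := by
  rw [choosePoly_succ, integral_choosePoly, mul_sum]
  refine add_le_add le_rfl (sum_le_sum fun m hm => ?_)
  have hchoose : (k : ℝ) * N.choose m ≤ (m + 1) * N.choose (m + 1) := by
    exact_mod_cast Nat.mul_choose_le_succ_mul_choose_succ (by simp at hm; omega)
  rw [← sub_nonneg]
  have hdiff : (N.choose (m + 1) : ℝ) * n.choose m * t ^ (m + 1) -
      k * (N.choose m * n.choose m * (t ^ (m + 1) / (m + 1))) =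
      ((m + 1) * N.choose (m + 1) - k * N.choose m) * (n.choose m * t ^ (m + 1)) / (m + 1) := by
    field_simp
  have hcoeff := sub_nonneg.2 hchoose
  rw [hdiff]
  positivity

theorem one_add_sum_Icc_le_choosePoly {N : ℕ} {u : ℕ → ℝ → ℝ}
    (hcont : ∀ k, 1 ≤ k → k ≤ N → Continuous (u k))
    (hineq : ∀ k, 1 ≤ k → k ≤ N → ∀ t, 0 ≤ t →
      u k t ≤ (k : ℝ) * ∫ s in (0 : ℝ)..t, (1 + ∑ l ∈ Icc (k + 1) N, u l s))
    {n : ℕ} (hn : n ≤ N) {t : ℝ} (ht : 0 ≤ t) :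
    1 + ∑ l ∈ Icc (N + 1 - n) N, u l t ≤ choosePoly N n t := by
  induction n generalizing t with
  | zero => simp
  | succ n ih =>
    rw [show N + 1 - (n + 1) = N - n by omega]
    have hk : N - n + 1 = N + 1 - n := by omega
    have hsplit : Icc (N - n) N = insert (N - n) (Icc (N + 1 - n) N) := by
      rw [← hk, insert_Icc_add_one_left_eq_Icc (by omega)]
    have hintegrand : Continuous fun s => 1 + ∑ l ∈ Icc (N + 1 - n) N, u l s :=
      continuous_const.add <| continuous_finsetSum _ fun l hl => by
        simp only [mem_Icc] at hl
        exact hcont l (by omega) hl.2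
    have hu : u (N - n) t ≤ (N - n : ℕ) * ∫ s in (0 : ℝ)..t, choosePoly N n s := by
      refine (hineq _ (by omega) (by omega) t ht).trans ?_
      rw [hk]
      gcongr
      exact intervalIntegral.integral_mono_on ht (hintegrand.intervalIntegrable 0 t)
        ((continuous_choosePoly N n).intervalIntegrable 0 t) fun s hs => ih (by omega) hs.1
    rw [hsplit, sum_insert (by simp; omega)]
    linarith [ih (by omega) ht,
      choosePoly_add_mul_integral_le (N := N) (n := n) (k := N - n) (by omega) ht]

theorem finite_section_induction_bound_general
    (N : ℕ) (u : ℕ → ℝ → ℝ)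
    (hcont : ∀ k, 1 ≤ k → k ≤ N → Continuous (u k))
    (hineq : ∀ k, 1 ≤ k → k ≤ N → ∀ t, 0 ≤ t →
      u k t ≤ (k : ℝ) * ∫ s in (0:ℝ)..t, (1 + ∑ l ∈ Finset.Icc (k+1) N, u l s)) :
    ∀ k, 2 ≤ k → k ≤ N → ∀ t : ℝ, 0 ≤ t →
      1 + ∑ l ∈ Finset.Icc k N, u l t ≤
        ∑ m ∈ Finset.range (N - k + 2),
          (N.choose m : ℝ) * ((N - k + 1).choose m : ℝ) * t ^ m := by
  intro k _ hkN t ht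
  have h := one_add_sum_Icc_le_choosePoly hcont hineq (n := N - k + 1) (by omega) ht
  rwa [show N + 1 - (N - k + 1) = k by omega] at h

theorem finite_section_induction_bound
    (N : ℕ) (hN : 1 ≤ N) (u : ℕ → ℝ → ℝ)
    (hcont : ∀ k, 1 ≤ k → k ≤ N → Continuous (u k))
    (hnonneg : ∀ k, 1 ≤ k → k ≤ N → ∀ t, 0 ≤ t → 0 ≤ u k t)
    (hineq : ∀ k, 1 ≤ k → k ≤ N → ∀ t, 0 ≤ t →
      u k t ≤ (k : ℝ) * ∫ s in (0:ℝ)..t, (1 + ∑ l ∈ Finset.Icc (k+1) N, u l s)) :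
    ∀ k, 2 ≤ k → k ≤ N → ∀ t : ℝ, 0 ≤ t →
      1 + ∑ l ∈ Finset.Icc k N, u l t ≤
        ∑ m ∈ Finset.range (N - k + 2),
          (N.choose m : ℝ) * ((N - k + 1).choose m : ℝ) * t ^ m :=
  finite_section_induction_bound_general N u hcont hineq
end

section
/- For all integers $N \ge 1$, $1 \le m \le N$, and $2 \le k \le N$, the binomial coefficients satisfy $\binom{N}{m}\binom{N-k}{m} + \frac{k}{m}\binom{N}{m-1}\binom{N-k}{m-1} \le \binom{N}{m}\binom{N-k+1}{m}$, provided $k \le N - m + 1$ so that all coefficients are meaningful (with the convention $\binom{a}{b} = 0$ when $b > a \ge 0$). -/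
theorem binomial_pascal_inequality
    (N k m : ℕ) (hN : 1 ≤ N) (hm1 : 1 ≤ m) (hmN : m ≤ N)
    (hk2 : 2 ≤ k) (hkN : k ≤ N) (hkm : k ≤ N - m + 1) :
    (N.choose m : ℝ) * ((N - k).choose m : ℝ) +
      ((k : ℝ) / (m : ℝ)) * (N.choose (m-1) : ℝ) * ((N - k).choose (m-1) : ℝ) ≤
      (N.choose m : ℝ) * ((N - k + 1).choose m : ℝ) := by
  have hm0 : (0:ℝ) < (m:ℝ) := by exact_mod_cast hm1
  have hpascal : (N - k + 1).choose m = (N-k).choose m + (N-k).choose (m-1) := by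
    obtain ⟨m', rfl⟩ : ∃ m', m = m' + 1 := ⟨m-1, by omega⟩
    simp [Nat.choose_succ_succ, Nat.add_comm]
  have hkey : (k:ℝ) * (N.choose (m-1)) ≤ (m:ℝ) * (N.choose m) := by
    have h1 : N.choose m * m = N.choose (m-1) * (N - (m-1)) := by
      have := Nat.choose_succ_right_eq N (m-1)
      rw [show m - 1 + 1 = m from by omega] at this; exact this
    have hle : k * N.choose (m-1) ≤ m * N.choose m := by
      rw [mul_comm m, h1, mul_comm k]
      exact Nat.mul_le_mul_left _ (by omega)
    exact_mod_cast hle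
  have hb : (0:ℝ) ≤ ((N-k).choose (m-1) : ℝ) := by positivity
  rw [hpascal]
  push_cast
  have hdiv : ((k:ℝ)/(m:ℝ)) * (N.choose (m-1) : ℝ) ≤ (N.choose m : ℝ) := by
    rw [div_mul_eq_mul_div, div_le_iff₀ hm0]
    nlinarith [hkey]
  nlinarith [mul_le_mul_of_nonneg_right hdiv hb]
end

section
/- Let $N \ge 1$ and let $u_{k,N} : [0,\infty) \to [0,\infty)$, $1 \le k \le N$, be continuous functions satisfying $u_{k,N}(t) \le k \int_0^t \big(1 + \sum_{l=k+1}^{N} u_{l,N}(s)\big) ds$ for all $t \ge 0$. Then $u_{1,N}(t) \le t^{1/2}(1 + t^{1/2})^{2N}$ for all $t \ge 0$. -/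
/-!
Downward induction on the block index: `1 + ∑_{l > N - j} u l` is bounded on `[0, ∞)` by the
polynomial `∑_{m ≤ j} C(N,m) C(j,m) t^m`, because integrating it and multiplying by `N - j`
gives coefficients `(N - j) C(N,m) C(j,m) / (m + 1) ≤ C(N,m+1) C(j,m)`, which Pascal's rule
absorbs into the next polynomial. For `u 1` this leaves `∑_m C(N,m) C(N-1,m) t^(m+1) / (m+1)`,
and Vandermonde's identity bounds each coefficient by `C(2N, 2m+1)`, so the sum is at most the
odd-indexed half of the binomial expansion of `√t (1 + √t)^(2N)`.
-/

open Finset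

theorem Nat.sub_mul_choose_le_succ_mul_choose_succ {n j m : ℕ} (hm : m ≤ j) :
    (n - j) * n.choose m ≤ (m + 1) * n.choose (m + 1) :=
  calc (n - j) * n.choose m ≤ (n - m) * n.choose m := Nat.mul_le_mul_right _ (by omega)
    _ = (m + 1) * n.choose (m + 1) := by rw [mul_comm, ← Nat.choose_succ_right_eq, mul_comm]

theorem Nat.choose_mul_choose_succ_le_choose_two_mul (n m : ℕ) :
    n.choose m * n.choose (m + 1) ≤ (2 * n).choose (2 * m + 1) := by
  rw [two_mul, Nat.add_choose_eq]
  exact single_le_sum (f := fun p : ℕ × ℕ => n.choose p.1 * n.choose p.2)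
    (fun _ _ => Nat.zero_le _) (a := (m, m + 1)) (mem_antidiagonal.mpr (by omega))

theorem Nat.choose_mul_choose_pred_le {n : ℕ} (hn : 1 ≤ n) (m : ℕ) :
    n.choose m * (n - 1).choose m ≤ (m + 1) * (2 * n).choose (2 * m + 1) := by
  have hpascal : n * (n - 1).choose m = (m + 1) * n.choose (m + 1) := by
    obtain ⟨n, rfl⟩ := Nat.exists_eq_add_of_le' hn
    rw [Nat.add_sub_cancel, Nat.add_one_mul_choose_eq, mul_comm]
  calc n.choose m * (n - 1).choose m ≤ n * (n.choose m * (n - 1).choose m) :=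
        Nat.le_mul_of_pos_left _ hn
    _ = (m + 1) * (n.choose m * n.choose (m + 1)) := by rw [mul_left_comm, hpascal]; ring
    _ ≤ (m + 1) * (2 * n).choose (2 * m + 1) :=
        Nat.mul_le_mul_left _ (Nat.choose_mul_choose_succ_le_choose_two_mul n m)

theorem intervalIntegral.integral_sum_mul_pow (c : ℕ → ℝ) (s : Finset ℕ) (t : ℝ) :
    ∫ x in (0 : ℝ)..t, ∑ m ∈ s, c m * x ^ m = ∑ m ∈ s, c m * (t ^ (m + 1) / (m + 1)) := by
  rw [intervalIntegral.integral_finsetSum fun m _ => (by fun_prop : Continuous _).intervalIntegrable _ _]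
  simp [intervalIntegral.integral_const_mul, integral_pow]

noncomputable def tailMajorant (n j : ℕ) (t : ℝ) : ℝ :=
  ∑ m ∈ range (j + 1), (n.choose m * j.choose m : ℝ) * t ^ m

theorem continuous_tailMajorant (n j : ℕ) : Continuous (tailMajorant n j) := by
  unfold tailMajorant; fun_prop

theorem tailMajorant_succ (n j : ℕ) (t : ℝ) :
    tailMajorant n (j + 1) t =
      tailMajorant n j t + ∑ m ∈ range (j + 1), (n.choose (m + 1) * j.choose m : ℝ) * t ^ (m + 1) := by
  let a : ℕ → ℕ → ℝ := fun i m => (n.choose m * i.choose m : ℝ) * t ^ m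
  have hpascal : ∀ m, a (j + 1) (m + 1) =
      (n.choose (m + 1) * j.choose m : ℝ) * t ^ (m + 1) + a j (m + 1) := fun m => by
    simp only [a, Nat.choose_succ_succ']; push_cast; ring
  have hvanish : a j (j + 1) = 0 := by simp [a]
  calc tailMajorant n (j + 1) t = ∑ m ∈ range (j + 1), a (j + 1) (m + 1) + a (j + 1) 0 :=
        sum_range_succ' _ _
    _ = ∑ m ∈ range (j + 1), (n.choose (m + 1) * j.choose m : ℝ) * t ^ (m + 1) +
          (∑ m ∈ range (j + 1), a j (m + 1) + a j 0) := by
        simp only [hpascal, sum_add_distrib, a, Nat.choose_zero_right]; ring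
    _ = _ := by
        rw [← sum_range_succ' (a j), sum_range_succ (a j), hvanish, add_zero, add_comm]; rfl

theorem tailMajorant_add_mul_integral_le {n j : ℕ} {t : ℝ} (ht : 0 ≤ t) :
    tailMajorant n j t + ((n - j : ℕ) : ℝ) * ∫ s in (0 : ℝ)..t, tailMajorant n j s ≤
      tailMajorant n (j + 1) t := by
  rw [tailMajorant_succ, add_le_add_iff_left]
  unfold tailMajorant
  rw [intervalIntegral.integral_sum_mul_pow, mul_sum]
  refine sum_le_sum fun m hm => ?_
  have hcoeff : ((n - j : ℕ) : ℝ) * n.choose m ≤ (m + 1) * n.choose (m + 1) := by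
    exact_mod_cast Nat.sub_mul_choose_le_succ_mul_choose_succ (Nat.lt_succ_iff.mp (mem_range.mp hm))
  calc ((n - j : ℕ) : ℝ) * ((n.choose m * j.choose m : ℝ) * (t ^ (m + 1) / (m + 1)))
      = ((n - j : ℕ) : ℝ) * n.choose m * (j.choose m * t ^ (m + 1)) / (m + 1) := by ring
    _ ≤ (m + 1) * n.choose (m + 1) * (j.choose m * t ^ (m + 1)) / (m + 1) := by gcongr
    _ = (n.choose (m + 1) * j.choose m : ℝ) * t ^ (m + 1) := by field_simp

theorem integral_tailMajorant_pred_le {n : ℕ} (hn : 1 ≤ n) {t : ℝ} (ht : 0 ≤ t) :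
    ∫ s in (0 : ℝ)..t, tailMajorant n (n - 1) s ≤ √t * (1 + √t) ^ (2 * n) := by
  have ht' : t = √t ^ 2 := (Real.sq_sqrt ht).symm
  set r := √t
  have hr : 0 ≤ r := Real.sqrt_nonneg t
  unfold tailMajorant
  rw [intervalIntegral.integral_sum_mul_pow, Nat.sub_add_cancel hn]
  calc ∑ m ∈ range n, (n.choose m * (n - 1).choose m : ℝ) * (t ^ (m + 1) / (m + 1))
      ≤ ∑ m ∈ range n, ((2 * n).choose (2 * m + 1) : ℝ) * r ^ (2 * m + 1 + 1) := by
        refine sum_le_sum fun m _ => ?_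
        have hcoeff : (n.choose m * (n - 1).choose m : ℝ) ≤ (m + 1) * (2 * n).choose (2 * m + 1) := by
          exact_mod_cast Nat.choose_mul_choose_pred_le hn m
        calc (n.choose m * (n - 1).choose m : ℝ) * (t ^ (m + 1) / (m + 1))
            = (n.choose m * (n - 1).choose m : ℝ) * r ^ (2 * m + 1 + 1) / (m + 1) := by
              rw [ht', ← pow_mul]; ring_nf
          _ ≤ (m + 1) * (2 * n).choose (2 * m + 1) * r ^ (2 * m + 1 + 1) / (m + 1) := by gcongr
          _ = _ := by field_simp
    _ = ∑ k ∈ (range n).map ⟨fun m => 2 * m + 1, fun a b h => by simpa using h⟩,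
          ((2 * n).choose k : ℝ) * r ^ (k + 1) := by rw [sum_map]; rfl
    _ ≤ ∑ k ∈ range (2 * n + 1), ((2 * n).choose k : ℝ) * r ^ (k + 1) := by
        refine sum_le_sum_of_subset_of_nonneg (fun k hk => ?_) fun k _ _ => by positivity
        obtain ⟨m, hm, rfl⟩ := mem_map.mp hk
        rw [mem_range] at hm ⊢
        show 2 * m + 1 < 2 * n + 1
        omega
    _ = r * (1 + r) ^ (2 * n) := by
        rw [add_comm (1 : ℝ) r, add_pow, mul_sum]
        exact sum_congr rfl fun k _ => by ring

section Blocks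

variable {N : ℕ} {u : ℕ → ℝ → ℝ}

theorem continuous_one_add_sum_Icc (hcont : ∀ k, 1 ≤ k → k ≤ N → Continuous (u k)) (k : ℕ) :
    Continuous fun s => 1 + ∑ l ∈ Icc (k + 1) N, u l s :=
  continuous_const.add <| continuous_finsetSum _ fun l hl =>
    hcont l (by have := (mem_Icc.mp hl).1; omega) (mem_Icc.mp hl).2

theorem le_mul_integral_tailMajorant (hcont : ∀ k, 1 ≤ k → k ≤ N → Continuous (u k))
    (hineq : ∀ k, 1 ≤ k → k ≤ N → ∀ t, 0 ≤ t →
      u k t ≤ (k : ℝ) * ∫ s in (0 : ℝ)..t, (1 + ∑ l ∈ Icc (k + 1) N, u l s))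
    {k j : ℕ} (hk : 1 ≤ k) (hkN : k ≤ N)
    (htail : ∀ s, 0 ≤ s → 1 + ∑ l ∈ Icc (k + 1) N, u l s ≤ tailMajorant N j s)
    {t : ℝ} (ht : 0 ≤ t) :
    u k t ≤ k * ∫ s in (0 : ℝ)..t, tailMajorant N j s :=
  (hineq k hk hkN t ht).trans <| mul_le_mul_of_nonneg_left
    (intervalIntegral.integral_mono_on ht
      ((continuous_one_add_sum_Icc hcont k).intervalIntegrable _ _)
      ((continuous_tailMajorant N j).intervalIntegrable _ _) fun s hs => htail s hs.1)
    k.cast_nonneg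

theorem one_add_sum_Icc_le_tailMajorant (hcont : ∀ k, 1 ≤ k → k ≤ N → Continuous (u k))
    (hineq : ∀ k, 1 ≤ k → k ≤ N → ∀ t, 0 ≤ t →
      u k t ≤ (k : ℝ) * ∫ s in (0 : ℝ)..t, (1 + ∑ l ∈ Icc (k + 1) N, u l s))
    {j : ℕ} (hj : j ≤ N) {t : ℝ} (ht : 0 ≤ t) :
    1 + ∑ l ∈ Icc (N - j + 1) N, u l t ≤ tailMajorant N j t := by
  induction j generalizing t with
  | zero => simp [Icc_eq_empty_of_lt, tailMajorant]
  | succ j ih =>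
    have hIcc : Icc (N - (j + 1) + 1) N = insert (N - j) (Icc (N - j + 1) N) := by
      ext l; simp only [mem_Icc, mem_insert]; omega
    have hblock := le_mul_integral_tailMajorant hcont hineq (by omega) (Nat.sub_le N j)
      (fun s hs => ih (by omega) hs) ht
    rw [hIcc, sum_insert (by simp), add_left_comm]
    calc u (N - j) t + (1 + ∑ l ∈ Icc (N - j + 1) N, u l t)
        ≤ ((N - j : ℕ) : ℝ) * (∫ s in (0 : ℝ)..t, tailMajorant N j s) + tailMajorant N j t :=
          add_le_add hblock (ih (by omega) ht)
      _ ≤ tailMajorant N (j + 1) t := by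
          rw [add_comm]; exact tailMajorant_add_mul_integral_le ht

end Blocks

theorem finite_section_first_block_bound_general
    (N : ℕ) (hN : 1 ≤ N) (u : ℕ → ℝ → ℝ)
    (hcont : ∀ k, 1 ≤ k → k ≤ N → Continuous (u k))
    (hineq : ∀ k, 1 ≤ k → k ≤ N → ∀ t, 0 ≤ t →
      u k t ≤ (k : ℝ) * ∫ s in (0:ℝ)..t, (1 + ∑ l ∈ Finset.Icc (k+1) N, u l s)) :
    ∀ t : ℝ, 0 ≤ t → u 1 t ≤ Real.sqrt t * (1 + Real.sqrt t) ^ (2 * N) := by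
  intro t ht
  have htail : ∀ s, 0 ≤ s → 1 + ∑ l ∈ Icc (1 + 1) N, u l s ≤ tailMajorant N (N - 1) s := by
    intro s hs
    simpa [Nat.sub_sub_self hN] using one_add_sum_Icc_le_tailMajorant hcont hineq (Nat.sub_le N 1) hs
  calc u 1 t ≤ ((1 : ℕ) : ℝ) * ∫ s in (0 : ℝ)..t, tailMajorant N (N - 1) s :=
        le_mul_integral_tailMajorant hcont hineq le_rfl hN htail ht
    _ ≤ √t * (1 + √t) ^ (2 * N) := by
        rw [Nat.cast_one, one_mul]; exact integral_tailMajorant_pred_le hN ht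

theorem finite_section_first_block_bound
    (N : ℕ) (hN : 1 ≤ N) (u : ℕ → ℝ → ℝ)
    (hcont : ∀ k, 1 ≤ k → k ≤ N → Continuous (u k))
    (hnonneg : ∀ k, 1 ≤ k → k ≤ N → ∀ t, 0 ≤ t → 0 ≤ u k t)
    (hineq : ∀ k, 1 ≤ k → k ≤ N → ∀ t, 0 ≤ t →
      u k t ≤ (k : ℝ) * ∫ s in (0:ℝ)..t, (1 + ∑ l ∈ Finset.Icc (k+1) N, u l s)) :
    ∀ t : ℝ, 0 ≤ t → u 1 t ≤ Real.sqrt t * (1 + Real.sqrt t) ^ (2 * N) :=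
  finite_section_first_block_bound_general N hN u hcont hineq
end
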